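/- Polynomial runtime bound for safe aperiodic programs (core of the soundness proof): for every safe and aperiodic program P = prog(x̄){s return y} there exists a polynomial Q with natural-number coefficients such that for all input words w̄, the evaluation tree π_{(μ∅[x̄←w̄], s)} is finite and its number of nodes (i.e., of big-step rule applications) is at most Q(Σᵢ |wᵢ|). -/

import Mathlib

namespace Declass

/-! ### Words over a finite alphabet -/

/-- Words over the alphabet `σ`. -/
abbrev Word (σ : Type) := List σ

/-- An operator signature: a set of operators, each with an arity and a total semantics. -/
structure OpSig (σ : Type) where
  Op : Type
  ar : Op → ℕ
  sem : (o : Op) → (Fin (ar o) → Word σ) → Word σ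

variable {σ : Type}

/-! ### Syntax -/

/-- Expressions of the first-order imperative language. -/
inductive Expr (O : OpSig σ) : Type where
  | var : ℕ → Expr O
  | op : (o : O.Op) → (Fin (O.ar o) → Expr O) → Expr O
  | declass : Expr O → Expr O → Expr O

/-- Statements of the first-order imperative language. -/
inductive Stmt (O : OpSig σ) : Type where
  | skip : Stmt O
  | assign : ℕ → Expr O → Stmt O
  | seq : Stmt O → Stmt O → Stmt O
  | ite : Expr O → Stmt O → Stmt O → Stmt O
  | whileLoop : Expr O → Stmt O → Stmt O
  | brk : Expr O → Stmt O

/-- A program `prog(x̄){s return x}`. -/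
structure Prog (O : OpSig σ) where
  arity : ℕ
  params : Fin arity → ℕ
  body : Stmt O
  ret : ℕ

/-! ### Semantics -/

/-- A memory store: a total map from variables to words. -/
abbrev Store (σ : Type) := ℕ → Word σ

variable {O : OpSig σ}

/-- The initial store `μ∅[x̄ ← w̄]`. -/
def initStore (P : Prog O) (ws : Fin P.arity → Word σ) : Store σ :=
  (List.ofFn fun i => (P.params i, ws i)).foldl
    (fun μ p => Function.update μ p.1 p.2) (fun _ => ([] : Word σ))

/-- Big-step semantics of expressions; `one` is the letter `1`, the word `[one]`
is the boolean `true`, and `declass(e₁,e₂)` evaluates to `1^(min(|w₁|,|w₂|))`. -/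
inductive EvalE (one : σ) : Store σ → Expr O → Word σ → Prop where
  | var : ∀ (μ : Store σ) (x : ℕ), EvalE one μ (.var x) (μ x)
  | op : ∀ (μ : Store σ) (o : O.Op) (es : Fin (O.ar o) → Expr O) (ws : Fin (O.ar o) → Word σ),
      (∀ i, EvalE one μ (es i) (ws i)) → EvalE one μ (.op o es) (O.sem o ws)
  | declass : ∀ (μ : Store σ) (e₁ e₂ : Expr O) (w₁ w₂ : Word σ),
      EvalE one μ e₁ w₁ → EvalE one μ e₂ w₂ →
      EvalE one μ (.declass e₁ e₂) (List.replicate (min w₁.length w₂.length) one)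

/-- Big-step semantics of statements. The boolean flag is `true` for `⊤` (normal
termination) and `false` for `⊥` (a break aborted the control flow). -/
inductive EvalS (one : σ) : Store σ → Stmt O → Bool × Store σ → Prop where
  | skip : ∀ μ : Store σ, EvalS one μ .skip (true, μ)
  | assign : ∀ (μ : Store σ) (x : ℕ) (e : Expr O) (w : Word σ), EvalE one μ e w →
      EvalS one μ (.assign x e) (true, Function.update μ x w)
  | seq_top : ∀ (μ μ' : Store σ) (r : Bool × Store σ) (s₁ s₂ : Stmt O),
      EvalS one μ s₁ (true, μ') → EvalS one μ' s₂ r → EvalS one μ (.seq s₁ s₂) r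
  | seq_brk : ∀ (μ μ' : Store σ) (s₁ s₂ : Stmt O),
      EvalS one μ s₁ (false, μ') → EvalS one μ (.seq s₁ s₂) (false, μ')
  | ite_true : ∀ (μ : Store σ) (e : Expr O) (s₁ s₀ : Stmt O) (r : Bool × Store σ),
      EvalE one μ e [one] → EvalS one μ s₁ r → EvalS one μ (.ite e s₁ s₀) r
  | ite_false : ∀ (μ : Store σ) (e : Expr O) (s₁ s₀ : Stmt O) (w : Word σ) (r : Bool × Store σ),
      EvalE one μ e w → w ≠ [one] → EvalS one μ s₀ r → EvalS one μ (.ite e s₁ s₀) r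
  | while_false : ∀ (μ : Store σ) (e : Expr O) (s : Stmt O) (w : Word σ),
      EvalE one μ e w → w ≠ [one] → EvalS one μ (.whileLoop e s) (true, μ)
  | while_true : ∀ (μ μ' : Store σ) (e : Expr O) (s : Stmt O) (b : Bool),
      EvalE one μ e [one] → EvalS one μ (.seq s (.whileLoop e s)) (b, μ') →
      EvalS one μ (.whileLoop e s) (true, μ')
  | brk_false : ∀ (μ : Store σ) (e : Expr O) (w : Word σ),
      EvalE one μ e w → w ≠ [one] → EvalS one μ (.brk e) (true, μ)
  | brk_true : ∀ (μ : Store σ) (e : Expr O),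
      EvalE one μ e [one] → EvalS one μ (.brk e) (false, μ)

/-- `⟦P⟧(w̄) = v`. -/
def Prog.Outputs (one : σ) (P : Prog O) (ws : Fin P.arity → Word σ) (v : Word σ) : Prop :=
  ∃ μ' : Store σ, EvalS one (initStore P ws) P.body (true, μ') ∧ μ' P.ret = v

/-- `P ∈ TERM`: the partial function `⟦P⟧` is total. -/
def Prog.Terminating (one : σ) (P : Prog O) : Prop :=
  ∀ ws : Fin P.arity → Word σ, ∃ v, P.Outputs one ws v

/-- The (partial) function `⟦P⟧` coincides with the total function `f`. -/
def Prog.Computes (one : σ) (P : Prog O) (f : (Fin P.arity → Word σ) → Word σ) : Prop :=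
  ∀ (ws : Fin P.arity → Word σ) (v : Word σ), P.Outputs one ws v ↔ v = f ws

/-! ### Operator classification -/

/-- `maxᵢ |wᵢ|`. -/
def maxSize {k : ℕ} (ws : Fin k → Word σ) : ℕ :=
  Finset.univ.sup fun i => (ws i).length

/-- A neutral operator: a predicate (into `{0,1}`) or a subword operation. -/
def NeutralOp (zero one : σ) (O : OpSig σ) (o : O.Op) : Prop :=
  (∀ ws, O.sem o ws = [zero] ∨ O.sem o ws = [one]) ∨
  ∃ i : Fin (O.ar o), ∀ ws, (O.sem o ws) <:+: (ws i)

/-- A positive operator: `|⟦op⟧(w̄)| ≤ maxᵢ |wᵢ| + c`. -/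
def PositiveOp (O : OpSig σ) (o : O.Op) : Prop :=
  ∃ c : ℕ, ∀ ws, (O.sem o ws).length ≤ maxSize ws + c

/-- A polynomial operator: `|⟦op⟧(w̄)| ≤ Q(maxᵢ |wᵢ|)`. -/
def PolyOp (O : OpSig σ) (o : O.Op) : Prop :=
  ∃ Q : Polynomial ℕ, ∀ ws, (O.sem o ws).length ≤ Q.eval (maxSize ws)

/-! ### Polynomial-time computability (FP) -/

/-- The trivial encoding of words over `σ` as strings over `σ`. -/
def wordEncoding (σ : Type) [Fintype σ] : Computability.Encoding (Word σ) σ where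
  encode := id
  decode := some
  decode_encode _ := rfl

/-- Encoding of tuples of words, using a fresh separator symbol. -/
def tupleEncoding (σ : Type) [Fintype σ] [DecidableEq σ] (n : ℕ) :
    Computability.Encoding (Fin n → Word σ) (Option σ) where
  encode ws := List.intercalate [none] (List.ofFn fun i => (ws i).map some)
  decode l :=
    if h0 : n = 0 then
      if l = [] then some (fun i => absurd i.2 (by omega)) else none
    else if h : (@List.splitOn _ instBEqOfDecidableEq none l).length = n then
      some fun i => ((@List.splitOn _ instBEqOfDecidableEq none l).get (Fin.cast h.symm i)).reduceOption
    else none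
  decode_encode ws := by
    by_cases h0 : n = 0
    · subst h0
      have henc : List.intercalate [none] (List.ofFn fun i : Fin 0 => (ws i).map some)
          = ([] : List (Option σ)) := by simp [List.intercalate]
      simp only [henc, dif_pos rfl, if_pos rfl]
      exact congrArg some (funext fun i => i.elim0)
    · have hsplit : (@List.splitOn _ instBEqOfDecidableEq none
            (List.intercalate [none] (List.ofFn fun i => (ws i).map some)))
          = List.ofFn fun i => (ws i).map some := by
        apply @List.splitOn_intercalate _ _ instBEqOfDecidableEq _
        · intro l hl
          simp only [List.mem_ofFn] at hl
          obtain ⟨i, rfl⟩ := hl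
          simp
        · simp only [ne_eq, List.ofFn_eq_nil_iff]
          omega
      have hred : ∀ w : Word σ, (w.map some).reduceOption = w := by
        intro w
        induction w with
        | nil => rfl
        | cons a t ih => simpa [List.reduceOption_cons_of_some] using ih
      simp only [h0, dite_false, hsplit, List.length_ofFn, dite_true, dif_neg, dif_pos]
      congr 1
      funext i
      simp [hsplit, List.getElem_ofFn, hred]

/-- `f ∈ FP`: `f` is computable in polynomial time by a (deterministic) Turing machine. -/
def InFP [Fintype σ] [DecidableEq σ] {n : ℕ} (f : (Fin n → Word σ) → Word σ) : Prop :=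
  Nonempty (Turing.TM2ComputableInPolyTime (tupleEncoding σ n).encode (wordEncoding σ).encode f)

/-! ### The level-based type system -/

/-- An operator typing environment: `Δ(op)(τin, τout)` is a set of admissible
functional levels `τ₁ → … → τ_{ar(op)+1}` (viewed as tuples). -/
abbrev OpEnv (O : OpSig σ) := (o : O.Op) → ℕ → ℕ → Set (Fin (O.ar o + 1) → ℕ)

/-- Typing judgments for expressions: `Γ, Δ ⊢^{τin}_{τout} e : τ`. -/
inductive TypE (Γ : ℕ → ℕ) (Δ : OpEnv O) : ℕ → ℕ → Expr O → ℕ → Prop where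
  | var : ∀ (τin τout : ℕ) (x : ℕ), TypE Γ Δ τin τout (.var x) (Γ x)
  | op : ∀ (τin τout : ℕ) (o : O.Op) (es : Fin (O.ar o) → Expr O)
      (τs : Fin (O.ar o + 1) → ℕ), τs ∈ Δ o τin τout →
      (∀ i : Fin (O.ar o), TypE Γ Δ τin τout (es i) (τs i.castSucc)) →
      TypE Γ Δ τin τout (.op o es) (τs (Fin.last _))
  | declass : ∀ (τin τout : ℕ) (e₁ e₂ : Expr O) (τ₁ τ : ℕ),
      TypE Γ Δ τin τout e₁ τ₁ → TypE Γ Δ τin τout e₂ τout →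
      τ₁ ≤ τ → τ ≤ τout → TypE Γ Δ τin τout (.declass e₁ e₂) τ

/-- Typing judgments for statements: `Γ, Δ ⊢^{τin}_{τout} s : τ` (Figure 3). -/
inductive TypS (Γ : ℕ → ℕ) (Δ : OpEnv O) : ℕ → ℕ → Stmt O → ℕ → Prop where
  | sub : ∀ (τin τout : ℕ) (s : Stmt O) (τ₁ τ₂ : ℕ),
      TypS Γ Δ τin τout s τ₁ → τ₁ ≤ τ₂ → TypS Γ Δ τin τout s τ₂
  | skip : ∀ τin τout : ℕ, TypS Γ Δ τin τout .skip 0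
  | assign : ∀ (τin τout : ℕ) (x : ℕ) (e : Expr O) (τ₂ : ℕ),
      TypE Γ Δ τin τout e τ₂ → (τout = 0 ∨ Γ x ≤ τ₂) →
      TypS Γ Δ τin τout (.assign x e) (Γ x)
  | seq : ∀ (τin τout : ℕ) (s₁ s₂ : Stmt O) (τ : ℕ),
      TypS Γ Δ τin τout s₁ τ → TypS Γ Δ τin τout s₂ τ →
      TypS Γ Δ τin τout (.seq s₁ s₂) τ
  | cond : ∀ (τin τout : ℕ) (e : Expr O) (s₁ s₀ : Stmt O) (τ : ℕ),
      TypE Γ Δ τin τout e τ → TypS Γ Δ τin τout s₁ τ → TypS Γ Δ τin τout s₀ τ →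
      TypS Γ Δ τin τout (.ite e s₁ s₀) τ
  | whileNested : ∀ (τin τout : ℕ) (e : Expr O) (s : Stmt O) (τ : ℕ),
      TypE Γ Δ τ τout e τ → TypS Γ Δ τ τout s τ → 1 ≤ τ → τ ≤ τout →
      TypS Γ Δ τin τout (.whileLoop e s) τ
  | whileInit : ∀ (e : Expr O) (s : Stmt O) (τ : ℕ),
      TypE Γ Δ τ τ e τ → TypS Γ Δ τ τ s τ → 1 ≤ τ →
      TypS Γ Δ 0 0 (.whileLoop e s) τ
  | brk : ∀ (τin τout : ℕ) (e : Expr O) (τ : ℕ),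
      TypE Γ Δ τin τout e τ → τin ≤ τ → TypS Γ Δ τin τout (.brk e) τin

/-- A safe operator typing environment (Definition 2.2). -/
def SafeOpEnv [Fintype σ] [DecidableEq σ] (zero one : σ) (Δ : OpEnv O) : Prop :=
  ∀ o : O.Op,
    (NeutralOp zero one O o ∨ PositiveOp O o ∨ PolyOp O o) ∧
    InFP (O.sem o) ∧
    ∀ (τin τout : ℕ) (τs : Fin (O.ar o + 1) → ℕ), τs ∈ Δ o τin τout →
      (NeutralOp zero one O o →
        ∀ i : Fin (O.ar o), τs (Fin.last _) ≤ τs i.castSucc) ∧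
      ((PositiveOp O o ∧ ¬ NeutralOp zero one O o) →
        (∀ i : Fin (O.ar o), τs (Fin.last _) ≤ τs i.castSucc) ∧
        (τs (Fin.last _) < τin ∨ τs (Fin.last _) = 0)) ∧
      ((PolyOp O o ∧ ¬ PositiveOp O o) → τout = 0)

/-- `P ∈ ΔSAFE`. -/
def DeltaSafe (Δ : OpEnv O) (P : Prog O) : Prop :=
  ∃ (Γ : ℕ → ℕ) (τ : ℕ), TypS Γ Δ 0 0 P.body τ

/-- `P ∈ SAFE`. -/
def Safe [Fintype σ] [DecidableEq σ] (zero one : σ) (P : Prog O) : Prop :=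
  ∃ Δ : OpEnv O, SafeOpEnv zero one Δ ∧ DeltaSafe Δ P

/-! ### Aperiodicity -/

/-- The set `U(e)` of undeclassified variables of an expression. -/
def undecl : Expr O → Set ℕ
  | .var x => {x}
  | .op _ es => ⋃ i, undecl (es i)
  | .declass _ e₂ => undecl e₂

/-- `μ ≡_e μ'`: the stores agree on all undeclassified variables of `e`. -/
def EquivOn (e : Expr O) (μ μ' : Store σ) : Prop :=
  ∀ x ∈ undecl e, μ x = μ' x

/-- One step of the subtree relation of the (possibly infinite) evaluation tree:
`SubConf one c c'` holds iff `π_{c'}` is an immediate (statement-)subtree of `π_c`. -/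
inductive SubConf (one : σ) : Store σ × Stmt O → Store σ × Stmt O → Prop where
  | seq_left : ∀ (μ : Store σ) (s₁ s₂ : Stmt O), SubConf one (μ, .seq s₁ s₂) (μ, s₁)
  | seq_right : ∀ (μ μ' : Store σ) (s₁ s₂ : Stmt O),
      EvalS one μ s₁ (true, μ') → SubConf one (μ, .seq s₁ s₂) (μ', s₂)
  | ite_true : ∀ (μ : Store σ) (e : Expr O) (s₁ s₀ : Stmt O),
      EvalE one μ e [one] → SubConf one (μ, .ite e s₁ s₀) (μ, s₁)
  | ite_false : ∀ (μ : Store σ) (e : Expr O) (s₁ s₀ : Stmt O) (w : Word σ),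
      EvalE one μ e w → w ≠ [one] → SubConf one (μ, .ite e s₁ s₀) (μ, s₀)
  | while_true : ∀ (μ : Store σ) (e : Expr O) (s : Stmt O),
      EvalE one μ e [one] →
      SubConf one (μ, .whileLoop e s) (μ, .seq s (.whileLoop e s))

/-- No while loop reachable from `(μ, s₀)` is ever evaluated twice (one occurrence
strictly inside the other) under `e`-equivalent stores. -/
def NoRepeat (one : σ) (s₀ : Stmt O) (μ : Store σ) : Prop :=
  ¬ ∃ (e : Expr O) (s : Stmt O) (μ' μ'' : Store σ),
      Relation.ReflTransGen (SubConf one) (μ, s₀) (μ', .whileLoop e s) ∧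
      Relation.TransGen (SubConf one) (μ', .whileLoop e s) (μ'', .whileLoop e s) ∧
      EquivOn e μ' μ''

/-- `P ∈ AP`: `P` is aperiodic. -/
def Aperiodic (one : σ) (P : Prog O) : Prop :=
  ∀ μ : Store σ, NoRepeat one P.body μ

/-! ### Size of evaluation trees -/

/-- Big-step evaluation of expressions, additionally counting the number of
nodes (rule applications) of the evaluation tree. -/
inductive EvalEN (one : σ) : Store σ → Expr O → Word σ → ℕ → Prop where
  | var : ∀ (μ : Store σ) (x : ℕ), EvalEN one μ (.var x) (μ x) 1
  | op : ∀ (μ : Store σ) (o : O.Op) (es : Fin (O.ar o) → Expr O)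
      (ws : Fin (O.ar o) → Word σ) (ns : Fin (O.ar o) → ℕ),
      (∀ i, EvalEN one μ (es i) (ws i) (ns i)) →
      EvalEN one μ (.op o es) (O.sem o ws) (1 + Finset.univ.sum ns)
  | declass : ∀ (μ : Store σ) (e₁ e₂ : Expr O) (w₁ w₂ : Word σ) (n₁ n₂ : ℕ),
      EvalEN one μ e₁ w₁ n₁ → EvalEN one μ e₂ w₂ n₂ →
      EvalEN one μ (.declass e₁ e₂)
        (List.replicate (min w₁.length w₂.length) one) (1 + n₁ + n₂)

/-- Big-step evaluation of statements, additionally counting the number of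
nodes (rule applications) of the evaluation tree. -/
inductive EvalSN (one : σ) : Store σ → Stmt O → Bool × Store σ → ℕ → Prop where
  | skip : ∀ μ : Store σ, EvalSN one μ .skip (true, μ) 1
  | assign : ∀ (μ : Store σ) (x : ℕ) (e : Expr O) (w : Word σ) (n : ℕ),
      EvalEN one μ e w n →
      EvalSN one μ (.assign x e) (true, Function.update μ x w) (1 + n)
  | seq_top : ∀ (μ μ' : Store σ) (r : Bool × Store σ) (s₁ s₂ : Stmt O) (n₁ n₂ : ℕ),
      EvalSN one μ s₁ (true, μ') n₁ → EvalSN one μ' s₂ r n₂ →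
      EvalSN one μ (.seq s₁ s₂) r (1 + n₁ + n₂)
  | seq_brk : ∀ (μ μ' : Store σ) (s₁ s₂ : Stmt O) (n₁ : ℕ),
      EvalSN one μ s₁ (false, μ') n₁ → EvalSN one μ (.seq s₁ s₂) (false, μ') (1 + n₁)
  | ite_true : ∀ (μ : Store σ) (e : Expr O) (s₁ s₀ : Stmt O) (r : Bool × Store σ) (m n : ℕ),
      EvalEN one μ e [one] m → EvalSN one μ s₁ r n →
      EvalSN one μ (.ite e s₁ s₀) r (1 + m + n)
  | ite_false : ∀ (μ : Store σ) (e : Expr O) (s₁ s₀ : Stmt O) (w : Word σ)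
      (r : Bool × Store σ) (m n : ℕ),
      EvalEN one μ e w m → w ≠ [one] → EvalSN one μ s₀ r n →
      EvalSN one μ (.ite e s₁ s₀) r (1 + m + n)
  | while_false : ∀ (μ : Store σ) (e : Expr O) (s : Stmt O) (w : Word σ) (m : ℕ),
      EvalEN one μ e w m → w ≠ [one] → EvalSN one μ (.whileLoop e s) (true, μ) (1 + m)
  | while_true : ∀ (μ μ' : Store σ) (e : Expr O) (s : Stmt O) (b : Bool) (m n : ℕ),
      EvalEN one μ e [one] m → EvalSN one μ (.seq s (.whileLoop e s)) (b, μ') n →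
      EvalSN one μ (.whileLoop e s) (true, μ') (1 + m + n)
  | brk_false : ∀ (μ : Store σ) (e : Expr O) (w : Word σ) (m : ℕ),
      EvalEN one μ e w m → w ≠ [one] → EvalSN one μ (.brk e) (true, μ) (1 + m)
  | brk_true : ∀ (μ : Store σ) (e : Expr O) (m : ℕ),
      EvalEN one μ e [one] m → EvalSN one μ (.brk e) (false, μ) (1 + m)

/-!
Sizes are measured level by level: `levelSize Γ X ℓ μ` is the longest value held by a variable of
level at least `ℓ`. Inside a loop of level `τ`, the typing rules only let neutral operators and
declassification write to variables of level at least `τ`, so these keep values among the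
subwords of their initial values, the booleans and short unary words: a set of polynomial size.
In particular the undeclassified variables of the guard range over polynomially many tuples, and
aperiodicity forbids a tuple to recur at the head of the loop, which bounds the number of
iterations. Below level `τ`, positive operators make each iteration add to the size at level `ℓ`
a polynomial in the sizes at level `ℓ + 1`, so a downward recursion over the levels bounds every
size polynomially throughout the loop. Outside loops, polynomial operators and sequencing merely
compose polynomials.
-/

lemma eval_mono (p : Polynomial ℕ) {a b : ℕ} (h : a ≤ b) : p.eval a ≤ p.eval b := by
  induction p using Polynomial.induction_on' with
  | add p q hp hq => simpa only [Polynomial.eval_add] using add_le_add hp hq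
  | monomial n c =>
    simp only [Polynomial.eval_monomial]
    exact Nat.mul_le_mul_left _ (Nat.pow_le_pow_left h n)

section Words

variable {α : Type*} [DecidableEq α]

def infixes (w : List α) : Finset (List α) :=
  (w.tails.flatMap List.inits).toFinset

lemma mem_infixes {v w : List α} : v ∈ infixes w ↔ v <:+: w := by
  simp only [infixes, List.mem_toFinset, List.mem_flatMap, List.mem_tails, List.mem_inits,
    List.infix_iff_prefix_suffix]
  tauto

lemma card_infixes_le (w : List α) : (infixes w).card ≤ (w.length + 1) ^ 2 := by
  refine (List.toFinset_card_le _).trans ?_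
  rw [List.length_flatMap, sq]
  refine (List.sum_le_card_nsmul _ (w.length + 1) ?_).trans (by simp)
  simp only [List.mem_map, List.mem_tails]
  rintro _ ⟨t, ht, rfl⟩
  simpa using ht.length_le

end Words

namespace Expr

def size : Expr O → ℕ
  | .var _ => 1
  | .op _ es => 1 + ∑ i, size (es i)
  | .declass a b => 1 + size a + size b

def vars : Expr O → Finset ℕ
  | .var x => {x}
  | .op _ es => Finset.univ.biUnion fun i => vars (es i)
  | .declass a b => vars a ∪ vars b

def undeclVars : Expr O → Finset ℕ
  | .var x => {x}
  | .op _ es => Finset.univ.biUnion fun i => undeclVars (es i)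
  | .declass _ b => undeclVars b

lemma coe_undeclVars (e : Expr O) : (e.undeclVars : Set ℕ) = undecl e := by
  induction e with
  | var x => simp [undeclVars, undecl]
  | op o es ih => simp [undeclVars, undecl, ih]
  | declass a b _ ihb => simpa [undeclVars, undecl] using ihb

lemma undeclVars_subset_vars (e : Expr O) : e.undeclVars ⊆ e.vars := by
  induction e with
  | var x => simp [undeclVars, vars]
  | op o es ih => exact Finset.biUnion_mono fun i _ => ih i
  | declass a b _ ihb => exact ihb.trans Finset.subset_union_right

lemma vars_subset_op {o : O.Op} {es : Fin (O.ar o) → Expr O} (i : Fin (O.ar o)) :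
    (es i).vars ⊆ (Expr.op o es).vars :=
  Finset.subset_biUnion_of_mem (fun i => (es i).vars) (Finset.mem_univ i)

end Expr

def Stmt.vars : Stmt O → Finset ℕ
  | .skip => ∅
  | .assign x e => insert x e.vars
  | .seq a b => a.vars ∪ b.vars
  | .ite e a b => e.vars ∪ (a.vars ∪ b.vars)
  | .whileLoop e s => e.vars ∪ s.vars
  | .brk e => e.vars

section Evaluation

variable {one : σ}

lemma exists_evalEN (one : σ) (μ : Store σ) (e : Expr O) : ∃ w, EvalEN one μ e w e.size := by
  induction e with
  | var x => exact ⟨_, .var μ x⟩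
  | op o es ih =>
    choose ws h using ih
    exact ⟨_, .op μ o es ws _ h⟩
  | declass a b iha ihb =>
    obtain ⟨wa, ha⟩ := iha
    obtain ⟨wb, hb⟩ := ihb
    exact ⟨_, .declass μ a b wa wb _ _ ha hb⟩

lemma EvalEN.evalE {μ : Store σ} {e : Expr O} {w : Word σ} {n : ℕ}
    (h : EvalEN one μ e w n) : EvalE one μ e w := by
  induction h with
  | var => exact .var _ _
  | op _ _ _ _ _ ih => exact .op _ _ _ _ ih
  | declass _ _ _ _ _ _ _ _ ih₁ ih₂ => exact .declass _ _ _ _ _ ih₁ ih₂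

lemma EvalSN.evalS {μ : Store σ} {s : Stmt O} {r : Bool × Store σ} {n : ℕ}
    (h : EvalSN one μ s r n) : EvalS one μ s r := by
  induction h with
  | skip => exact .skip _
  | assign _ _ _ _ _ he => exact .assign _ _ _ _ he.evalE
  | seq_top _ _ _ _ _ _ _ _ _ ih₁ ih₂ => exact .seq_top _ _ _ _ _ ih₁ ih₂
  | seq_brk _ _ _ _ _ _ ih => exact .seq_brk _ _ _ _ ih
  | ite_true _ _ _ _ _ _ _ he _ ih => exact .ite_true _ _ _ _ _ he.evalE ih
  | ite_false _ _ _ _ _ _ _ _ he hne _ ih => exact .ite_false _ _ _ _ _ _ he.evalE hne ih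
  | while_false _ _ _ _ _ he hne => exact .while_false _ _ _ _ he.evalE hne
  | while_true _ _ _ _ _ _ _ he _ ih => exact .while_true _ _ _ _ _ he.evalE ih
  | brk_false _ _ _ _ he hne => exact .brk_false _ _ _ he.evalE hne
  | brk_true _ _ _ he => exact .brk_true _ _ he.evalE

lemma NoRepeat.of_reflTransGen {s s' : Stmt O} {μ μ' : Store σ} (hnr : NoRepeat one s μ)
    (h : Relation.ReflTransGen (SubConf one) (μ, s) (μ', s')) : NoRepeat one s' μ' :=
  fun ⟨e, s'', ν, ν', h₁, h₂, h₃⟩ => hnr ⟨e, s'', ν, ν', h.trans h₁, h₂, h₃⟩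

lemma NoRepeat.of_subConf {s s' : Stmt O} {μ μ' : Store σ} (hnr : NoRepeat one s μ)
    (h : SubConf one (μ, s) (μ', s')) : NoRepeat one s' μ' :=
  hnr.of_reflTransGen (.single h)

end Evaluation

section LevelSize

variable {Γ : ℕ → ℕ} {X : Finset ℕ} {ℓ ℓ' : ℕ} {μ : Store σ}

def levelSize (Γ : ℕ → ℕ) (X : Finset ℕ) (ℓ : ℕ) (μ : Store σ) : ℕ :=
  (X.filter fun x => ℓ ≤ Γ x).sup fun x => (μ x).length

lemma length_le_levelSize {x : ℕ} (hx : x ∈ X) (hℓ : ℓ ≤ Γ x) :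
    (μ x).length ≤ levelSize Γ X ℓ μ :=
  Finset.le_sup (f := fun x => (μ x).length) (Finset.mem_filter.mpr ⟨hx, hℓ⟩)

lemma levelSize_le {n : ℕ} (h : ∀ x ∈ X, ℓ ≤ Γ x → (μ x).length ≤ n) :
    levelSize Γ X ℓ μ ≤ n :=
  Finset.sup_le fun x hx => h x (Finset.mem_filter.mp hx).1 (Finset.mem_filter.mp hx).2

lemma levelSize_anti (h : ℓ ≤ ℓ') (μ : Store σ) : levelSize Γ X ℓ' μ ≤ levelSize Γ X ℓ μ :=
  levelSize_le fun _ hx hℓ' => length_le_levelSize hx (h.trans hℓ')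

lemma levelSize_update_le {x : ℕ} {w : Word σ} :
    levelSize Γ X ℓ (Function.update μ x w) ≤ max (levelSize Γ X ℓ μ) w.length := by
  refine levelSize_le fun y hy hℓ => ?_
  rcases eq_or_ne y x with rfl | hne
  · simp
  · simpa [Function.update_of_ne hne] using Or.inl (length_le_levelSize hy hℓ)

lemma levelSize_update_of_lt {x : ℕ} {w : Word σ} (h : Γ x < ℓ) :
    levelSize Γ X ℓ (Function.update μ x w) = levelSize Γ X ℓ μ :=
  Finset.sup_congr rfl fun y hy => by
    rw [Function.update_of_ne]
    rintro rfl
    exact absurd (Finset.mem_filter.mp hy).2 (by omega)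

end LevelSize

section Operators

variable [Fintype σ] [DecidableEq σ] {zero one : σ} {Δ : OpEnv O}

lemma SafeOpEnv.polyOp (hΔ : SafeOpEnv zero one Δ) (o : O.Op) : PolyOp O o := by
  rcases (hΔ o).1 with (hval | ⟨i, hsub⟩) | ⟨c, hc⟩ | hpoly
  · refine ⟨1, fun ws => ?_⟩
    rcases hval ws with h | h <;> simp [h]
  · exact ⟨.X, fun ws => by
      simpa [maxSize] using (hsub ws).length_le.trans (Finset.le_sup (f := fun i => (ws i).length)
        (Finset.mem_univ i))⟩
  · exact ⟨.X + .C c, fun ws => by simpa using hc ws⟩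
  · exact hpoly

lemma SafeOpEnv.of_one_le_out (hΔ : SafeOpEnv zero one Δ) {o : O.Op} {τin τout : ℕ}
    {τs : Fin (O.ar o + 1) → ℕ} (hm : τs ∈ Δ o τin τout) (ho : 1 ≤ τout) :
    (∀ i : Fin (O.ar o), τs (Fin.last _) ≤ τs i.castSucc) ∧
    (NeutralOp zero one O o ∨
      (PositiveOp O o ∧ (τs (Fin.last _) < τin ∨ τs (Fin.last _) = 0))) := by
  obtain ⟨hclass, -, hτs⟩ := hΔ o
  obtain ⟨hN, hP, hQ⟩ := hτs τin τout τs hm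
  by_cases hn : NeutralOp zero one O o
  · exact ⟨hN hn, Or.inl hn⟩
  by_cases hp : PositiveOp O o
  · exact ⟨(hP ⟨hp, hn⟩).1, Or.inr ⟨hp, (hP ⟨hp, hn⟩).2⟩⟩
  have := hQ ⟨hclass.resolve_left hn |>.resolve_left hp, hp⟩
  omega

end Operators

/-- The closure properties that keep the results of neutral operators and declassification inside
a set of values. -/
structure ValueClosed (zero one : σ) (V : Set (Word σ)) : Prop where
  infix_mem : ∀ ⦃v w⦄, w ∈ V → v <:+: w → v ∈ V
  zero_mem : [zero] ∈ V
  one_mem : [one] ∈ V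
  replicate_mem : ∀ w ∈ V, ∀ k ≤ w.length, List.replicate k one ∈ V

section TopLevel

variable {one : σ} {Γ : ℕ → ℕ} {X : Finset ℕ}

lemma exists_length_le_poly (hpoly : ∀ o, PolyOp O o) (e : Expr O) (hX : e.vars ⊆ X) :
    ∃ Q : Polynomial ℕ, ∀ μ w, EvalE one μ e w → w.length ≤ Q.eval (levelSize Γ X 0 μ) := by
  induction e with
  | var x =>
    refine ⟨.X, fun μ w hev => ?_⟩
    cases hev
    simpa using length_le_levelSize (hX (by simp [Expr.vars])) (Nat.zero_le _)
  | op o es ih =>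
    choose Q hQ using fun i => ih i ((Expr.vars_subset_op i).trans hX)
    obtain ⟨Qo, hQo⟩ := hpoly o
    refine ⟨Qo.comp (∑ i, Q i), fun μ w hev => ?_⟩
    cases hev with
    | op _ _ ws hws =>
      refine (hQo ws).trans ?_
      rw [Polynomial.eval_comp, Polynomial.eval_finsetSum]
      exact eval_mono _ (Finset.sup_le fun i _ => (hQ i μ _ (hws i)).trans
        (Finset.single_le_sum (f := fun i => (Q i).eval _) (fun _ _ => Nat.zero_le _)
          (Finset.mem_univ i)))
  | declass e₁ e₂ ih₁ _ =>
    simp only [Expr.vars, Finset.union_subset_iff] at hX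
    obtain ⟨Q, hQ⟩ := ih₁ hX.1
    refine ⟨Q, fun μ w hev => ?_⟩
    cases hev with
    | declass _ _ w₁ w₂ h₁ _ =>
      exact (List.length_replicate ..).le.trans ((min_le_left _ _).trans (hQ μ w₁ h₁))

end TopLevel

section ExprTyping

variable [Fintype σ] [DecidableEq σ] {zero one : σ} {Γ : ℕ → ℕ} {Δ : OpEnv O} {X : Finset ℕ}
  {τin τout p : ℕ} {e : Expr O}

lemma TypE.le_level_of_mem_undeclVars (hΔ : SafeOpEnv zero one Δ) (h : TypE Γ Δ τin τout e p)
    (ho : 1 ≤ τout) {x : ℕ} (hx : x ∈ e.undeclVars) : p ≤ Γ x := by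
  induction h with
  | var => simp_all [Expr.undeclVars]
  | op o es τs hm _ ih =>
    simp only [Expr.undeclVars, Finset.mem_biUnion, Finset.mem_univ, true_and] at hx
    obtain ⟨i, hi⟩ := hx
    exact ((hΔ.of_one_le_out hm ho).1 i).trans (ih i hi)
  | declass _ _ _ _ _ _ _ hle _ ih => exact hle.trans (ih hx)

lemma TypE.exists_length_le (hΔ : SafeOpEnv zero one Δ) (h : TypE Γ Δ τin τout e p)
    (ho : 1 ≤ τout) (hX : e.vars ⊆ X) :
    ∃ c, ∀ μ w, EvalE one μ e w → w.length ≤ max (levelSize Γ X p μ) 1 + c := by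
  induction h with
  | var x =>
    refine ⟨0, fun μ w hev => ?_⟩
    cases hev
    exact (length_le_levelSize (hX (by simp [Expr.vars])) le_rfl).trans (le_max_left _ _)
  | op o es τs hm _ ih =>
    obtain ⟨hle, hclass⟩ := hΔ.of_one_le_out hm ho
    choose c hc using fun i => ih i ((Expr.vars_subset_op i).trans hX)
    have harg : ∀ μ (ws : Fin (O.ar o) → Word σ), (∀ i, EvalE one μ (es i) (ws i)) → ∀ i,
        (ws i).length ≤ max (levelSize Γ X (τs (Fin.last _)) μ) 1 + ∑ i, c i := fun μ ws hws i =>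
      (hc i μ _ (hws i)).trans (add_le_add (max_le_max (levelSize_anti (hle i) μ) le_rfl)
        (Finset.single_le_sum (fun j _ => Nat.zero_le (c j)) (Finset.mem_univ i)))
    rcases hclass with (hval | ⟨i, hsub⟩) | ⟨⟨c₀, hc₀⟩, -⟩
    · refine ⟨0, fun μ w hev => ?_⟩
      cases hev
      rcases hval ‹_› with h | h <;> simp [h]
    · refine ⟨∑ i, c i, fun μ w hev => ?_⟩
      cases hev with | op _ _ ws hws => exact (hsub ws).length_le.trans (harg μ ws hws i)
    · refine ⟨∑ i, c i + c₀, fun μ w hev => ?_⟩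
      cases hev with
      | op _ _ ws hws =>
        have : maxSize ws ≤ _ := Finset.sup_le fun i _ => harg μ ws hws i
        have := hc₀ ws
        omega
  | declass e₁ e₂ _ _ _ _ _ hle _ ih₂ =>
    simp only [Expr.vars, Finset.union_subset_iff] at hX
    obtain ⟨c, hc⟩ := ih₂ hX.2
    refine ⟨c, fun μ w hev => ?_⟩
    cases hev with
    | declass _ _ w₁ w₂ _ h₂ =>
      have := hc μ w₂ h₂
      have := levelSize_anti hle μ (Γ := Γ) (X := X)
      simp only [List.length_replicate]
      omega

/-- No positive operator has a level `p ≥ τin ≥ 1`, so only neutral operators and declassification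
compute the value. -/
lemma TypE.mem_of_evalE (hΔ : SafeOpEnv zero one Δ) {V : Set (Word σ)}
    (hV : ValueClosed zero one V) (h : TypE Γ Δ τin τout e p) (hin : 1 ≤ τin) {ℓ : ℕ}
    (hℓ : τin ≤ ℓ) (hp : ℓ ≤ p) (ho : 1 ≤ τout) (hX : e.vars ⊆ X) {μ : Store σ}
    (hμ : ∀ x ∈ X, ℓ ≤ Γ x → μ x ∈ V) {w : Word σ} (hev : EvalE one μ e w) : w ∈ V := by
  induction h generalizing w with
  | var x =>
    cases hev
    exact hμ x (hX (by simp [Expr.vars])) hp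
  | op o es τs hm _ ih =>
    obtain ⟨hle, hclass⟩ := hΔ.of_one_le_out hm ho
    cases hev with
    | op _ _ ws hws =>
      rcases hclass with (hval | ⟨i, hsub⟩) | ⟨-, hlow⟩
      · rcases hval ws with h | h <;> rw [h]
        exacts [hV.zero_mem, hV.one_mem]
      · exact hV.infix_mem (ih i (hp.trans (hle i))
          ((Expr.vars_subset_op i).trans hX) (hws i)) (hsub ws)
      · omega
  | declass e₁ e₂ _ _ _ _ _ hle _ ih₂ =>
    simp only [Expr.vars, Finset.union_subset_iff] at hX
    cases hev with
    | declass _ _ w₁ w₂ _ h₂ =>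
      exact hV.replicate_mem _ (ih₂ (hp.trans hle) hX.2 h₂) _ (min_le_right _ _)

end ExprTyping

section StmtTyping

variable {Γ : ℕ → ℕ} {Δ : OpEnv O} {τin τout t : ℕ}

lemma TypS.assign_inv {x : ℕ} {e : Expr O} (h : TypS Γ Δ τin τout (.assign x e) t) :
    ∃ τ₂, TypE Γ Δ τin τout e τ₂ ∧ (τout = 0 ∨ Γ x ≤ τ₂) := by
  generalize hs : Stmt.assign x e = s at h
  induction h with
  | sub _ _ _ _ _ _ _ ih => exact ih hs
  | assign _ _ _ _ τ₂ he hc => cases hs; exact ⟨τ₂, he, hc⟩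
  | _ => cases hs

lemma TypS.seq_inv {s₁ s₂ : Stmt O} (h : TypS Γ Δ τin τout (.seq s₁ s₂) t) :
    ∃ t' ≤ t, TypS Γ Δ τin τout s₁ t' ∧ TypS Γ Δ τin τout s₂ t' := by
  generalize hs : Stmt.seq s₁ s₂ = s at h
  induction h with
  | sub _ _ _ _ _ _ hle ih =>
    obtain ⟨t', h₁, h₂, h₃⟩ := ih hs
    exact ⟨t', h₁.trans hle, h₂, h₃⟩
  | seq _ _ _ _ τ h₁ h₂ => cases hs; exact ⟨τ, le_rfl, h₁, h₂⟩
  | _ => cases hs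

lemma TypS.ite_inv {e : Expr O} {s₁ s₀ : Stmt O} (h : TypS Γ Δ τin τout (.ite e s₁ s₀) t) :
    ∃ t' ≤ t, TypS Γ Δ τin τout s₁ t' ∧ TypS Γ Δ τin τout s₀ t' := by
  generalize hs : Stmt.ite e s₁ s₀ = s at h
  induction h with
  | sub _ _ _ _ _ _ hle ih =>
    obtain ⟨t', h₁, h₂, h₃⟩ := ih hs
    exact ⟨t', h₁.trans hle, h₂, h₃⟩
  | cond _ _ _ _ _ τ _ h₁ h₀ => cases hs; exact ⟨τ, le_rfl, h₁, h₀⟩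
  | _ => cases hs

lemma TypS.while_inv {e : Expr O} {s : Stmt O} (h : TypS Γ Δ τin τout (.whileLoop e s) t) :
    ∃ τ, 1 ≤ τ ∧ τ ≤ t ∧
      ((τ ≤ τout ∧ TypE Γ Δ τ τout e τ ∧ TypS Γ Δ τ τout s τ) ∨ (τin = 0 ∧ τout = 0)) := by
  generalize hs : Stmt.whileLoop e s = s' at h
  induction h with
  | sub _ _ _ _ _ _ hle ih =>
    obtain ⟨τ, h₁, h₂, h₃⟩ := ih hs
    exact ⟨τ, h₁, h₂.trans hle, h₃⟩
  | whileNested _ _ _ _ τ he hs' h₁ hle => cases hs; exact ⟨τ, h₁, le_rfl, .inl ⟨hle, he, hs'⟩⟩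
  | whileInit _ _ τ _ _ h₁ => cases hs; exact ⟨τ, h₁, le_rfl, .inr ⟨rfl, rfl⟩⟩
  | _ => cases hs

variable [Fintype σ] [DecidableEq σ] {zero one : σ} {X : Finset ℕ}

lemma EvalS.mem_of_typS (hΔ : SafeOpEnv zero one Δ) {V : Set (Word σ)}
    (hV : ValueClosed zero one V) {μ : Store σ} {s : Stmt O} {r : Bool × Store σ}
    (hev : EvalS one μ s r) (h : TypS Γ Δ τin τout s t) (hin : 1 ≤ τin) {ℓ : ℕ}
    (hℓ : τin ≤ ℓ) (ht : t ≤ ℓ) (ho : 1 ≤ τout) (hX : s.vars ⊆ X)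
    (hμ : ∀ x ∈ X, ℓ ≤ Γ x → μ x ∈ V) : ∀ x ∈ X, ℓ ≤ Γ x → r.2 x ∈ V := by
  induction hev generalizing τin t with
  | skip | while_false | brk_false | brk_true => exact hμ
  | assign _ x e w hw =>
    obtain ⟨τ₂, he, hc⟩ := h.assign_inv
    simp only [Stmt.vars, Finset.insert_subset_iff] at hX
    intro y hy hℓy
    rcases eq_or_ne y x with rfl | hne
    · have hτ₂ : Γ y ≤ τ₂ := hc.resolve_left (by omega)
      simpa using he.mem_of_evalE hΔ hV hin hℓ (hℓy.trans hτ₂) ho hX.2 hμ hw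
    · simpa [Function.update_of_ne hne] using hμ y hy hℓy
  | seq_top _ _ _ _ _ _ _ ih₁ ih₂ =>
    obtain ⟨t', hle, h₁, h₂⟩ := h.seq_inv
    simp only [Stmt.vars, Finset.union_subset_iff] at hX
    exact ih₂ h₂ hin hℓ (hle.trans ht) hX.2 (ih₁ h₁ hin hℓ (hle.trans ht) hX.1 hμ)
  | seq_brk _ _ _ _ _ ih =>
    obtain ⟨t', hle, h₁, -⟩ := h.seq_inv
    simp only [Stmt.vars, Finset.union_subset_iff] at hX
    exact ih h₁ hin hℓ (hle.trans ht) hX.1 hμ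
  | ite_true _ _ _ _ _ _ _ ih =>
    obtain ⟨t', hle, h₁, -⟩ := h.ite_inv
    simp only [Stmt.vars, Finset.union_subset_iff] at hX
    exact ih h₁ hin hℓ (hle.trans ht) hX.2.1 hμ
  | ite_false _ _ _ _ _ _ _ _ _ ih =>
    obtain ⟨t', hle, -, h₀⟩ := h.ite_inv
    simp only [Stmt.vars, Finset.union_subset_iff] at hX
    exact ih h₀ hin hℓ (hle.trans ht) hX.2.2 hμ
  | while_true _ _ e s _ _ _ ih =>
    obtain ⟨τ, hτ, hτt, ⟨hτo, he, hs⟩ | ⟨h0, -⟩⟩ := h.while_inv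
    · have hX' : (Stmt.seq s (.whileLoop e s)).vars ⊆ X := by
        simp only [Stmt.vars, Finset.union_subset_iff] at hX ⊢
        exact ⟨hX.2, hX⟩
      exact ih (.seq _ _ _ _ _ hs (.whileNested _ _ _ _ _ he hs hτ hτo)) hτ (hτt.trans ht)
        (hτt.trans ht) hX' hμ
    · omega

end StmtTyping

section EvalBound

variable {one : σ}

def EvalBound (one : σ) (s : Stmt O) (cost : Store σ → ℕ) (R : Store σ → Store σ → Prop) :
    Prop :=
  ∀ μ, NoRepeat one s μ → ∃ b μ' N, EvalSN one μ s (b, μ') N ∧ N ≤ cost μ ∧ R μ μ'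

variable {s s₁ s₂ s₀ : Stmt O} {e : Expr O} {c c' c₁ c₂ : Store σ → ℕ}
  {R R' R₁ R₂ : Store σ → Store σ → Prop}

lemma EvalBound.mono (h : EvalBound one s c R) (hc : ∀ μ, c μ ≤ c' μ)
    (hR : ∀ μ μ', R μ μ' → R' μ μ') : EvalBound one s c' R' := fun μ hμ =>
  let ⟨b, μ', N, hev, hN, hr⟩ := h μ hμ
  ⟨b, μ', N, hev, hN.trans (hc μ), hR μ μ' hr⟩

lemma evalBound_skip : EvalBound one (.skip : Stmt O) (fun _ => 1) (fun μ μ' => μ' = μ) :=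
  fun μ _ => ⟨true, μ, 1, .skip μ, le_rfl, rfl⟩

lemma evalBound_brk : EvalBound one (.brk e) (fun _ => 1 + e.size) (fun μ μ' => μ' = μ) := by
  intro μ _
  obtain ⟨w, hw⟩ := exists_evalEN one μ e
  by_cases hw1 : w = [one]
  · subst hw1
    exact ⟨false, μ, _, .brk_true _ _ _ hw, le_rfl, rfl⟩
  · exact ⟨true, μ, _, .brk_false _ _ _ _ hw hw1, le_rfl, rfl⟩

lemma evalBound_assign (x : ℕ) :
    EvalBound one (.assign x e) (fun _ => 1 + e.size)
      (fun μ μ' => ∃ w, EvalE one μ e w ∧ μ' = Function.update μ x w) := by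
  intro μ _
  obtain ⟨w, hw⟩ := exists_evalEN one μ e
  exact ⟨true, _, _, .assign _ _ _ _ _ hw, le_rfl, w, hw.evalE, rfl⟩

lemma EvalBound.seq (h₁ : EvalBound one s₁ c₁ R₁) (h₂ : EvalBound one s₂ c₂ R₂)
    (hc : ∀ μ μ₁, R₁ μ μ₁ → c₂ μ₁ ≤ c μ) (hR₁ : ∀ μ μ₁, R₁ μ μ₁ → R μ μ₁)
    (hR : ∀ μ μ₁ μ₂, R₁ μ μ₁ → R₂ μ₁ μ₂ → R μ μ₂) :
    EvalBound one (.seq s₁ s₂) (fun μ => 1 + c₁ μ + c μ) R := by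
  intro μ hμ
  obtain ⟨b₁, μ₁, N₁, hev₁, hN₁, hr₁⟩ := h₁ μ (hμ.of_subConf (.seq_left _ _ _))
  cases b₁ with
  | false => exact ⟨false, μ₁, _, .seq_brk _ _ _ _ _ hev₁, by dsimp only; omega, hR₁ μ μ₁ hr₁⟩
  | true =>
    obtain ⟨b₂, μ₂, N₂, hev₂, hN₂, hr₂⟩ :=
      h₂ μ₁ (hμ.of_subConf (.seq_right _ _ _ _ hev₁.evalS))
    have := hc μ μ₁ hr₁
    exact ⟨b₂, μ₂, _, .seq_top _ _ _ _ _ _ _ hev₁ hev₂, by dsimp only; omega, hR μ μ₁ μ₂ hr₁ hr₂⟩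

lemma EvalBound.ite (h₁ : EvalBound one s₁ c R) (h₀ : EvalBound one s₀ c R) :
    EvalBound one (.ite e s₁ s₀) (fun μ => 1 + e.size + c μ) R := by
  intro μ hμ
  obtain ⟨w, hw⟩ := exists_evalEN one μ e
  by_cases hw1 : w = [one]
  · subst hw1
    obtain ⟨b, μ', N, hev, hN, hr⟩ := h₁ μ (hμ.of_subConf (.ite_true _ _ _ _ hw.evalE))
    exact ⟨b, μ', _, .ite_true _ _ _ _ _ _ _ hw hev, by dsimp only; omega, hr⟩
  · obtain ⟨b, μ', N, hev, hN, hr⟩ := h₀ μ (hμ.of_subConf (.ite_false _ _ _ _ _ hw.evalE hw1))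
    exact ⟨b, μ', _, .ite_false _ _ _ _ _ _ _ _ hw hw1 hev, by dsimp only; omega, hr⟩

end EvalBound

section Bounds

variable {one : σ} {Γ : ℕ → ℕ} {X : Finset ℕ}

/-- The size control that holds inside loops, where no polynomial operator may occur. -/
def InnerGrowth (Γ : ℕ → ℕ) (X : Finset ℕ) (F : Polynomial ℕ) (μ μ' : Store σ) : Prop :=
  ∀ ℓ, levelSize Γ X ℓ μ' ≤ max (levelSize Γ X ℓ μ) 1 + F.eval (levelSize Γ X (ℓ + 1) μ)

def InnerBound (one : σ) (Γ : ℕ → ℕ) (X : Finset ℕ) (s : Stmt O) : Prop :=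
  ∃ Fc Fg : Polynomial ℕ,
    EvalBound one s (fun μ => Fc.eval (levelSize Γ X 1 μ)) (InnerGrowth Γ X Fg)

def OuterBound (one : σ) (Γ : ℕ → ℕ) (X : Finset ℕ) (s : Stmt O) : Prop :=
  ∃ Fc Fg : Polynomial ℕ, EvalBound one s (fun μ => Fc.eval (levelSize Γ X 0 μ))
    (fun μ μ' => levelSize Γ X 0 μ' ≤ Fg.eval (levelSize Γ X 0 μ))

lemma InnerGrowth.levelSize_le {F : Polynomial ℕ} {μ μ' : Store σ} (h : InnerGrowth Γ X F μ μ')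
    (ℓ : ℕ) : levelSize Γ X ℓ μ' ≤ levelSize Γ X ℓ μ + 1 + F.eval (levelSize Γ X ℓ μ) := by
  have := h ℓ
  have := eval_mono F (levelSize_anti (Nat.le_add_right ℓ 1) μ (Γ := Γ) (X := X))
  omega

lemma InnerBound.outerBound {s : Stmt O} (h : InnerBound one Γ X s) : OuterBound one Γ X s := by
  obtain ⟨Fc, Fg, h⟩ := h
  refine ⟨Fc, .X + 1 + Fg, h.mono (fun μ => eval_mono Fc (levelSize_anti zero_le_one μ))
    fun μ μ' hg => ?_⟩
  simpa using hg.levelSize_le 0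

variable {s s₁ s₂ s₀ : Stmt O} {e : Expr O}

lemma InnerBound.of_evalBound {c : ℕ} (h : EvalBound one s (fun _ => c) fun μ μ' => μ' = μ) :
    InnerBound one Γ X s :=
  ⟨.C c, 0, h.mono (by simp) fun μ μ' h ℓ => by simp [h]⟩

lemma OuterBound.of_evalBound {c : ℕ} (h : EvalBound one s (fun _ => c) fun μ μ' => μ' = μ) :
    OuterBound one Γ X s :=
  ⟨.C c, .X, h.mono (by simp) fun μ μ' h => by simp [h]⟩

lemma InnerBound.seq (h₁ : InnerBound one Γ X s₁) (h₂ : InnerBound one Γ X s₂) :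
    InnerBound one Γ X (.seq s₁ s₂) := by
  obtain ⟨Fc₁, Fg₁, h₁⟩ := h₁
  obtain ⟨Fc₂, Fg₂, h₂⟩ := h₂
  refine ⟨1 + Fc₁ + Fc₂.comp (.X + 1 + Fg₁), Fg₁ + Fg₂.comp (.X + 1 + Fg₁),
    (h₁.seq h₂ (c := fun μ => Fc₂.eval (levelSize Γ X 1 μ + 1 + Fg₁.eval (levelSize Γ X 1 μ)))
      (fun μ μ₁ hg => ?_) (fun μ μ₁ hg ℓ => ?_) fun μ μ₁ μ₂ hg₁ hg₂ ℓ => ?_).mono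
      (fun μ => by simp [add_assoc]) fun _ _ => id⟩
  · simpa using eval_mono Fc₂ (hg.levelSize_le 1)
  · simpa using (hg ℓ).trans (Nat.add_le_add_left (Nat.le_add_right _ _) _)
  · have h₁ := hg₁ ℓ
    have h₂ := hg₂ ℓ
    have := eval_mono Fg₂ (hg₁.levelSize_le (ℓ + 1))
    simp only [Polynomial.eval_add, Polynomial.eval_comp, Polynomial.eval_X,
      Polynomial.eval_one]
    omega

lemma OuterBound.seq (h₁ : OuterBound one Γ X s₁) (h₂ : OuterBound one Γ X s₂) :
    OuterBound one Γ X (.seq s₁ s₂) := by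
  obtain ⟨Fc₁, Fg₁, h₁⟩ := h₁
  obtain ⟨Fc₂, Fg₂, h₂⟩ := h₂
  refine ⟨1 + Fc₁ + Fc₂.comp Fg₁, Fg₁ + Fg₂.comp Fg₁,
    (h₁.seq h₂ (c := fun μ => Fc₂.eval (Fg₁.eval (levelSize Γ X 0 μ))) (fun μ μ₁ hg => ?_)
      (fun μ μ₁ hg => ?_) fun μ μ₁ μ₂ hg₁ hg₂ => ?_).mono
      (fun μ => by simp [add_assoc]) fun _ _ => id⟩
  · simpa using eval_mono Fc₂ hg
  · simpa using hg.trans (Nat.le_add_right _ _)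
  · simpa using hg₂.trans ((eval_mono Fg₂ hg₁).trans (Nat.le_add_left _ _))

lemma InnerBound.ite (h₁ : InnerBound one Γ X s₁) (h₀ : InnerBound one Γ X s₀) :
    InnerBound one Γ X (.ite e s₁ s₀) := by
  obtain ⟨Fc₁, Fg₁, h₁⟩ := h₁
  obtain ⟨Fc₀, Fg₀, h₀⟩ := h₀
  refine ⟨.C (1 + e.size) + (Fc₁ + Fc₀), Fg₁ + Fg₀, ((h₁.mono (c' := fun μ =>
    (Fc₁ + Fc₀).eval (levelSize Γ X 1 μ)) (by simp) fun μ μ' hg ℓ => ?_).ite (h₀.mono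
      (by simp) fun μ μ' hg ℓ => ?_)).mono (by simp) fun _ _ => id⟩
  · simpa using (hg ℓ).trans (by omega)
  · simpa using (hg ℓ).trans (by omega)

lemma OuterBound.ite (h₁ : OuterBound one Γ X s₁) (h₀ : OuterBound one Γ X s₀) :
    OuterBound one Γ X (.ite e s₁ s₀) := by
  obtain ⟨Fc₁, Fg₁, h₁⟩ := h₁
  obtain ⟨Fc₀, Fg₀, h₀⟩ := h₀
  refine ⟨.C (1 + e.size) + (Fc₁ + Fc₀), Fg₁ + Fg₀, ((h₁.mono (c' := fun μ =>
    (Fc₁ + Fc₀).eval (levelSize Γ X 0 μ)) (by simp) fun μ μ' hg => ?_).ite (h₀.mono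
      (by simp) fun μ μ' hg => ?_)).mono (by simp) fun _ _ => id⟩
  · simpa using hg.trans (by omega)
  · simpa using hg.trans (by omega)

end Bounds

section Assign

variable {zero one : σ} {Γ : ℕ → ℕ} {Δ : OpEnv O} {X : Finset ℕ} {x : ℕ} {e : Expr O}

lemma InnerBound.assign [Fintype σ] [DecidableEq σ] (hΔ : SafeOpEnv zero one Δ) {τin τout τ₂ : ℕ}
    (he : TypE Γ Δ τin τout e τ₂) (hx : τout = 0 ∨ Γ x ≤ τ₂) (ho : 1 ≤ τout)
    (hX : e.vars ⊆ X) : InnerBound one Γ X (.assign x e) := by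
  obtain ⟨c, hc⟩ := he.exists_length_le (one := one) hΔ ho hX
  have hxτ : Γ x ≤ τ₂ := hx.resolve_left (by omega)
  refine ⟨.C (1 + e.size), .C c, (evalBound_assign x).mono (by simp) ?_⟩
  rintro μ _ ⟨w, hw, rfl⟩ ℓ
  rw [Polynomial.eval_C]
  by_cases hℓ : ℓ ≤ Γ x
  · have := hc μ w hw
    have := levelSize_anti (hℓ.trans hxτ) μ (Γ := Γ) (X := X)
    have := levelSize_update_le (Γ := Γ) (X := X) (ℓ := ℓ) (μ := μ) (x := x) (w := w)
    omega
  · rw [levelSize_update_of_lt (by omega)]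
    omega

lemma OuterBound.assign (hpoly : ∀ o, PolyOp O o) (hX : e.vars ⊆ X) :
    OuterBound one Γ X (.assign x e) := by
  obtain ⟨Q, hQ⟩ := exists_length_le_poly (one := one) (Γ := Γ) hpoly e hX
  refine ⟨.C (1 + e.size), .X + Q, (evalBound_assign x).mono (by simp) ?_⟩
  rintro μ _ ⟨w, hw, rfl⟩
  have := hQ μ w hw
  have := levelSize_update_le (Γ := Γ) (X := X) (ℓ := 0) (μ := μ) (x := x) (w := w)
  simp only [Polynomial.eval_add, Polynomial.eval_X]
  omega

end Assign

section AperiodicLoop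

open Relation

variable {one : σ} {e : Expr O} {s : Stmt O} {ν μ : Store σ}

def restrict (e : Expr O) (μ : Store σ) : e.undeclVars → Word σ := fun x => μ x

lemma equivOn_of_restrict_eq {μ' : Store σ} (h : restrict e μ = restrict e μ') :
    EquivOn e μ μ' := fun x hx =>
  congrFun h ⟨x, by rwa [← Expr.coe_undeclVars] at hx⟩

def SeenBefore (one : σ) (e : Expr O) (s : Stmt O) (ν μ : Store σ)
    (seen : Finset (e.undeclVars → Word σ)) : Prop :=
  ∀ r ∈ seen, ∃ μp, restrict e μp = r ∧
    ReflTransGen (SubConf one) (ν, .whileLoop e s) (μp, .whileLoop e s) ∧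
    TransGen (SubConf one) (μp, .whileLoop e s) (μ, .whileLoop e s)

lemma SeenBefore.restrict_not_mem (hν : NoRepeat one (.whileLoop e s) ν)
    {seen : Finset (e.undeclVars → Word σ)} (h : SeenBefore one e s ν μ seen) :
    restrict e μ ∉ seen := fun hr => by
  obtain ⟨μp, hrp, hp, hpμ⟩ := h _ hr
  exact hν ⟨e, s, μp, μ, hp, hpμ, equivOn_of_restrict_eq hrp⟩

variable [DecidableEq σ]

lemma SeenBefore.insert {seen : Finset (e.undeclVars → Word σ)} {μ₁ : Store σ}
    (h : SeenBefore one e s ν μ seen)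
    (hμ : ReflTransGen (SubConf one) (ν, .whileLoop e s) (μ, .whileLoop e s))
    (hμ₁ : TransGen (SubConf one) (μ, .whileLoop e s) (μ₁, .whileLoop e s)) :
    SeenBefore one e s ν μ₁ (insert (restrict e μ) seen) := by
  intro r hr
  rcases Finset.mem_insert.mp hr with rfl | hr
  · exact ⟨μ, rfl, hμ, hμ₁⟩
  · obtain ⟨μp, hrp, hp, hpμ⟩ := h r hr
    exact ⟨μp, hrp, hp, hpμ.trans hμ₁⟩

/-- By aperiodicity, the restriction of the store to the undeclassified variables of the guard
never recurs at the head of the loop; while it stays in `K`, at most `(K \ seen).card` further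
iterations follow. `Inv j` is an invariant of the head of the loop after `j` iterations. -/
lemma evalSN_while_of_seenBefore (hν : NoRepeat one (.whileLoop e s) ν)
    (K : Finset (e.undeclVars → Word σ)) (Inv : ℕ → Store σ → Prop) (c : ℕ)
    (hK : ∀ j μ, Inv j μ → restrict e μ ∈ K)
    (hstep : ∀ j μ, Inv j μ → j < K.card → NoRepeat one s μ →
      ∃ b μ' N, EvalSN one μ s (b, μ') N ∧ N ≤ c ∧ Inv (j + 1) μ')
    (k : ℕ) (μ : Store σ) (seen : Finset (e.undeclVars → Word σ)) (hk : (K \ seen).card ≤ k)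
    (hseen : seen ⊆ K) (hbefore : SeenBefore one e s ν μ seen)
    (hμ : ReflTransGen (SubConf one) (ν, .whileLoop e s) (μ, .whileLoop e s))
    (hinv : Inv seen.card μ) :
    ∃ μ' N j, EvalSN one μ (.whileLoop e s) (true, μ') N ∧
      N ≤ 1 + (k + 1) * (2 + e.size + c) ∧ j ≤ K.card ∧ Inv j μ' := by
  induction k using Nat.strong_induction_on generalizing μ seen with
  | _ k ih =>
  have hC : (k + 1) * (2 + e.size + c) = k * (2 + e.size + c) + (2 + e.size + c) := by ring
  obtain ⟨w, hw⟩ := exists_evalEN one μ e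
  by_cases hw1 : w = [one]
  swap
  · exact ⟨μ, _, _, .while_false _ _ _ _ _ hw hw1, by omega, Finset.card_le_card hseen, hinv⟩
  subst hw1
  have hr := hbefore.restrict_not_mem hν
  have hrK : restrict e μ ∈ K \ seen := Finset.mem_sdiff.mpr ⟨hK _ _ hinv, hr⟩
  have hlt : seen.card < K.card :=
    Finset.card_lt_card ⟨hseen, fun h => hr (h (Finset.mem_sdiff.mp hrK).1)⟩
  have hbody : ReflTransGen (SubConf one) (ν, .whileLoop e s) (μ, s) :=
    hμ.trans (.head (.while_true _ _ _ hw.evalE) (.single (.seq_left _ _ _)))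
  obtain ⟨b, μ₁, N₁, hev₁, hN₁, hinv₁⟩ := hstep _ _ hinv hlt (hν.of_reflTransGen hbody)
  cases b with
  | false =>
    exact ⟨μ₁, _, _, .while_true _ _ _ _ _ _ _ hw (.seq_brk _ _ _ _ _ hev₁), by omega, hlt, hinv₁⟩
  | true =>
    have hloop : TransGen (SubConf one) (μ, .whileLoop e s) (μ₁, .whileLoop e s) :=
      .tail (.single (.while_true _ _ _ hw.evalE)) (.seq_right _ _ _ _ hev₁.evalS)
    have hk₁ : (K \ insert (restrict e μ) seen).card = (K \ seen).card - 1 := by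
      rw [Finset.sdiff_insert, Finset.card_erase_of_mem hrK]
    have hpos : 1 ≤ k := (Finset.card_pos.mpr ⟨_, hrK⟩).trans_le hk
    obtain ⟨μ', N, j, hev, hN, hj, hinv'⟩ := ih (k - 1) (by omega) μ₁ _ (by omega)
      (Finset.insert_subset (Finset.mem_sdiff.mp hrK).1 hseen) (hbefore.insert hμ hloop)
      (hμ.trans hloop.to_reflTransGen) (by rwa [Finset.card_insert_of_notMem hr])
    have hC' : (k - 1 + 1) * (2 + e.size + c) = k * (2 + e.size + c) := by
      rw [Nat.sub_add_cancel hpos]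
    exact ⟨μ', _, j, .while_true _ _ _ _ _ _ _ hw (.seq_top _ _ _ _ _ _ _ hev₁ hev),
      by omega, hj, hinv'⟩

end AperiodicLoop

section LoopValues

variable [DecidableEq σ] {zero one : σ} {Γ : ℕ → ℕ} {X : Finset ℕ} {ν : Store σ} {ℓ : ℕ}

/-- Contains the values of the variables of level at least `ℓ` inside a loop of level at most `ℓ`
entered with store `ν`. -/
def loopValues (zero one : σ) (Γ : ℕ → ℕ) (X : Finset ℕ) (ν : Store σ) (ℓ : ℕ) :
    Finset (Word σ) :=
  ((X.filter fun x => ℓ ≤ Γ x).biUnion fun x => infixes (ν x)) ∪ {[zero], [one]} ∪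
    (Finset.range (max (levelSize Γ X ℓ ν) 1 + 1)).image fun k => List.replicate k one

lemma mem_loopValues {w : Word σ} :
    w ∈ loopValues zero one Γ X ν ℓ ↔ (∃ x ∈ X, ℓ ≤ Γ x ∧ w <:+: ν x) ∨ w = [zero] ∨ w = [one] ∨
      ∃ k ≤ max (levelSize Γ X ℓ ν) 1, List.replicate k one = w := by
  simp only [loopValues, Finset.mem_union, Finset.mem_biUnion, Finset.mem_filter, mem_infixes,
    Finset.mem_insert, Finset.mem_singleton, Finset.mem_image, Finset.mem_range, Nat.lt_succ_iff,
    and_assoc, or_assoc]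

lemma self_mem_loopValues {x : ℕ} (hx : x ∈ X) (hℓ : ℓ ≤ Γ x) :
    ν x ∈ loopValues zero one Γ X ν ℓ :=
  mem_loopValues.mpr (.inl ⟨x, hx, hℓ, List.infix_refl _⟩)

lemma length_le_of_mem_loopValues {w : Word σ} (hw : w ∈ loopValues zero one Γ X ν ℓ) :
    w.length ≤ max (levelSize Γ X ℓ ν) 1 := by
  rcases mem_loopValues.mp hw with ⟨x, hx, hℓ, hinf⟩ | rfl | rfl | ⟨k, hk, rfl⟩
  · exact hinf.length_le.trans ((length_le_levelSize hx hℓ).trans (le_max_left _ _))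
  · exact le_max_right _ _
  · exact le_max_right _ _
  · simpa using hk

lemma levelSize_le_of_mem_loopValues {μ : Store σ}
    (h : ∀ x ∈ X, ℓ ≤ Γ x → μ x ∈ loopValues zero one Γ X ν ℓ) :
    levelSize Γ X ℓ μ ≤ max (levelSize Γ X ℓ ν) 1 :=
  levelSize_le fun x hx hℓ => length_le_of_mem_loopValues (h x hx hℓ)

lemma valueClosed_loopValues : ValueClosed zero one ↑(loopValues zero one Γ X ν ℓ) where
  infix_mem v w hw hvw := by
    have hrep : ∀ k ≤ max (levelSize Γ X ℓ ν) 1, v <:+: List.replicate k one →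
        v ∈ loopValues zero one Γ X ν ℓ := fun k hk hv =>
      mem_loopValues.mpr (.inr (.inr (.inr ⟨v.length,
        (show v.length ≤ k by simpa using hv.length_le).trans hk,
        (List.eq_replicate_length.mpr fun _ hb => List.eq_of_mem_replicate (hv.subset hb)).symm⟩)))
    rcases mem_loopValues.mp hw with ⟨x, hx, hℓ, hinf⟩ | rfl | rfl | ⟨k, hk, rfl⟩
    · exact mem_loopValues.mpr (.inl ⟨x, hx, hℓ, hvw.trans hinf⟩)
    · rcases List.sublist_singleton.mp hvw.sublist with rfl | rfl
      exacts [hrep 0 (Nat.zero_le _) List.nil_infix, mem_loopValues.mpr (.inr (.inl rfl))]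
    · rcases List.sublist_singleton.mp hvw.sublist with rfl | rfl
      exacts [hrep 0 (Nat.zero_le _) List.nil_infix, mem_loopValues.mpr (.inr (.inr (.inl rfl)))]
    · exact hrep k hk hvw
  zero_mem := mem_loopValues.mpr (.inr (.inl rfl))
  one_mem := mem_loopValues.mpr (.inr (.inr (.inl rfl)))
  replicate_mem w hw k hk :=
    mem_loopValues.mpr (.inr (.inr (.inr ⟨k, hk.trans (length_le_of_mem_loopValues hw), rfl⟩)))

lemma card_loopValues_le :
    (loopValues zero one Γ X ν ℓ).card ≤
      X.card * (levelSize Γ X ℓ ν + 1) ^ 2 + levelSize Γ X ℓ ν + 4 := by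
  set L := levelSize Γ X ℓ ν with hL
  have hinf : ((X.filter fun x => ℓ ≤ Γ x).biUnion fun x => infixes (ν x)).card ≤
      X.card * (L + 1) ^ 2 := by
    refine Finset.card_biUnion_le.trans ((Finset.sum_le_card_nsmul _ _ ((L + 1) ^ 2) ?_).trans ?_)
    · intro x hx
      have := length_le_levelSize (μ := ν) (Finset.mem_filter.mp hx).1 (Finset.mem_filter.mp hx).2
      exact (card_infixes_le _).trans (Nat.pow_le_pow_left (by omega) 2)
    · exact Nat.mul_le_mul_right _ (Finset.card_le_card (Finset.filter_subset _ _))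
  have hbool : ({[zero], [one]} : Finset (Word σ)).card ≤ 2 := Finset.card_le_two
  have hunary : ((Finset.range (max L 1 + 1)).image fun k => List.replicate k one).card ≤
      L + 2 := Finset.card_image_le.trans (by simp only [Finset.card_range]; omega)
  have := Finset.card_union_le (((X.filter fun x => ℓ ≤ Γ x).biUnion fun x => infixes (ν x)) ∪
    {[zero], [one]}) ((Finset.range (max L 1 + 1)).image fun k => List.replicate k one)
  have := Finset.card_union_le ((X.filter fun x => ℓ ≤ Γ x).biUnion fun x => infixes (ν x))
    {[zero], [one]}
  rw [loopValues, ← hL]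
  omega

end LoopValues

noncomputable def levelPoly (A F : Polynomial ℕ) : ℕ → Polynomial ℕ
  | 0 => .X + 1
  | d + 1 => .X + 1 + A * F.comp (levelPoly A F d)

lemma levelPoly_mono (A F : Polynomial ℕ) {d d' : ℕ} (h : d ≤ d') (t : ℕ) :
    (levelPoly A F d).eval t ≤ (levelPoly A F d').eval t := by
  refine monotone_nat_of_le_succ (f := fun d => (levelPoly A F d).eval t) (fun d => ?_) h
  induction d with
  | zero => simp [levelPoly]
  | succ d ih =>
    simp only [levelPoly, Polynomial.eval_add, Polynomial.eval_mul, Polynomial.eval_comp] at ih ⊢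
    exact Nat.add_le_add_left (Nat.mul_le_mul_left _ (eval_mono F ih)) _

section Loop

variable {Γ : ℕ → ℕ} {X : Finset ℕ}

/-- The bound on the size at level `ℓ` throughout a loop of level `τ` entered with store `ν`,
when each iteration adds at most `F` of the sizes above and there are at most `A` iterations. -/
noncomputable def loopBound (Γ : ℕ → ℕ) (X : Finset ℕ) (A F : Polynomial ℕ) (τ : ℕ)
    (ν : Store σ) (ℓ : ℕ) : ℕ :=
  (levelPoly A F (τ - ℓ)).eval (levelSize Γ X ℓ ν)

variable [DecidableEq σ] {zero one : σ} {τ : ℕ} {ν : Store σ} {A F : Polynomial ℕ}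

/-- The invariant at the head of a loop of level `τ` entered with store `ν`, after `j`
iterations. -/
def LoopInv (zero one : σ) (Γ : ℕ → ℕ) (X : Finset ℕ) (τ : ℕ) (ν : Store σ) (A F : Polynomial ℕ)
    (j : ℕ) (μ : Store σ) : Prop :=
  (∀ ℓ, τ ≤ ℓ → ∀ x ∈ X, ℓ ≤ Γ x → μ x ∈ loopValues zero one Γ X ν ℓ) ∧
  ∀ ℓ < τ,
    levelSize Γ X ℓ μ ≤ max (levelSize Γ X ℓ ν) 1 + j * F.eval (loopBound Γ X A F τ ν (ℓ + 1))

lemma loopInv_zero : LoopInv zero one Γ X τ ν A F 0 ν :=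
  ⟨fun _ _ _ hx hℓ => self_mem_loopValues hx hℓ, fun _ _ => by simp⟩

lemma LoopInv.levelSize_le {j : ℕ} {μ : Store σ} (h : LoopInv zero one Γ X τ ν A F j μ)
    (hj : j ≤ A.eval (levelSize Γ X τ ν)) (ℓ : ℕ) :
    levelSize Γ X ℓ μ ≤ loopBound Γ X A F τ ν ℓ := by
  by_cases hℓ : τ ≤ ℓ
  · have := levelSize_le_of_mem_loopValues (h.1 ℓ hℓ)
    simp only [loopBound, Nat.sub_eq_zero_of_le hℓ, levelPoly, Polynomial.eval_add,
      Polynomial.eval_X, Polynomial.eval_one]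
    omega
  obtain ⟨d, hd⟩ : ∃ d, τ - ℓ = d + 1 := ⟨τ - ℓ - 1, by omega⟩
  have hmul : j * F.eval (loopBound Γ X A F τ ν (ℓ + 1)) ≤
      A.eval (levelSize Γ X ℓ ν) * F.eval ((levelPoly A F d).eval (levelSize Γ X ℓ ν)) := by
    refine Nat.mul_le_mul (hj.trans (eval_mono A (levelSize_anti (by omega) ν))) (eval_mono F ?_)
    rw [loopBound, show τ - (ℓ + 1) = d by omega]
    exact eval_mono _ (levelSize_anti (Nat.le_add_right ℓ 1) ν)
  have := h.2 ℓ (by omega)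
  simp only [loopBound, hd, levelPoly, Polynomial.eval_add, Polynomial.eval_mul,
    Polynomial.eval_comp, Polynomial.eval_X, Polynomial.eval_one]
  omega

lemma LoopInv.restrict_mem [Fintype σ] {Δ : OpEnv O} (hΔ : SafeOpEnv zero one Δ) {τout : ℕ}
    {e : Expr O} (he : TypE Γ Δ τ τout e τ) (ho : 1 ≤ τout) (hX : e.vars ⊆ X) {j : ℕ}
    {μ : Store σ} (h : LoopInv zero one Γ X τ ν A F j μ) :
    restrict e μ ∈ Fintype.piFinset fun _ : e.undeclVars => loopValues zero one Γ X ν τ :=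
  Fintype.mem_piFinset.mpr fun x => h.1 τ le_rfl x (hX (e.undeclVars_subset_vars x.2))
    (he.le_level_of_mem_undeclVars hΔ ho x.2)

lemma LoopInv.step [Fintype σ] {Δ : OpEnv O} (hΔ : SafeOpEnv zero one Δ) {τout : ℕ} {s : Stmt O}
    (hτ : 1 ≤ τ) (hτo : τ ≤ τout) (hs : TypS Γ Δ τ τout s τ) (hX : s.vars ⊆ X) {Fc : Polynomial ℕ}
    (hb : EvalBound one s (fun μ => Fc.eval (levelSize Γ X 1 μ)) (InnerGrowth Γ X F))
    {j : ℕ} {μ : Store σ} (h : LoopInv zero one Γ X τ ν A F j μ)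
    (hj : j ≤ A.eval (levelSize Γ X τ ν)) (hμ : NoRepeat one s μ) :
    ∃ b μ' N, EvalSN one μ s (b, μ') N ∧ N ≤ Fc.eval (loopBound Γ X A F τ ν 1) ∧
      LoopInv zero one Γ X τ ν A F (j + 1) μ' := by
  obtain ⟨b, μ', N, hev, hN, hg⟩ := hb μ hμ
  refine ⟨b, μ', N, hev, hN.trans (eval_mono _ (h.levelSize_le hj 1)), fun ℓ hℓ =>
    hev.evalS.mem_of_typS hΔ valueClosed_loopValues hs hτ hℓ hℓ (hτ.trans hτo) hX (h.1 ℓ hℓ),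
    fun ℓ hℓ => ?_⟩
  have := hg ℓ
  have := h.2 ℓ hℓ
  have := eval_mono F (h.levelSize_le hj (ℓ + 1))
  rw [add_one_mul]
  omega

theorem InnerBound.whileLoop [Fintype σ] {Δ : OpEnv O} (hΔ : SafeOpEnv zero one Δ)
    {τout : ℕ} {e : Expr O} {s : Stmt O} (hτ : 1 ≤ τ) (hτo : τ ≤ τout)
    (he : TypE Γ Δ τ τout e τ) (hs : TypS Γ Δ τ τout s τ) (hXe : e.vars ⊆ X)
    (hXs : s.vars ⊆ X) (hb : InnerBound one Γ X s) : InnerBound one Γ X (.whileLoop e s) := by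
  obtain ⟨Fc, F, hb⟩ := hb
  set A : Polynomial ℕ := (.C X.card * (.X + 1) ^ 2 + .X + 4) ^ e.undeclVars.card
  refine ⟨1 + (A + 1) * (.C (2 + e.size) + Fc.comp (levelPoly A F (τ - 1))),
    A * F.comp (levelPoly A F τ), fun ν hν => ?_⟩
  set K := Fintype.piFinset fun _ : e.undeclVars => loopValues zero one Γ X ν τ
  have hK : ∀ ℓ ≤ τ, K.card ≤ A.eval (levelSize Γ X ℓ ν) := by
    intro ℓ hℓ
    refine le_trans ?_ (eval_mono A (levelSize_anti hℓ ν))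
    simpa [K, A, Fintype.card_piFinset] using Nat.pow_le_pow_left card_loopValues_le _
  obtain ⟨μ', N, j, hev, hN, hj, hinv⟩ := evalSN_while_of_seenBefore hν K
    (LoopInv zero one Γ X τ ν A F) (Fc.eval (loopBound Γ X A F τ ν 1))
    (fun _ _ h => h.restrict_mem hΔ he (hτ.trans hτo) hXe)
    (fun _ _ h hj => h.step hΔ hτ hτo hs hXs hb (hj.le.trans (hK τ le_rfl))) K.card ν ∅
    (by simp) (Finset.empty_subset _) (by simp [SeenBefore]) .refl loopInv_zero
  refine ⟨true, μ', N, hev, ?_, fun ℓ => ?_⟩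
  · have := Nat.mul_le_mul_right (2 + e.size + Fc.eval (loopBound Γ X A F τ ν 1))
      (Nat.add_le_add_right (hK 1 hτ) 1)
    simp only [loopBound] at hN this
    simp only [Polynomial.eval_add, Polynomial.eval_mul, Polynomial.eval_comp,
      Polynomial.eval_C, Polynomial.eval_one]
    omega
  by_cases hℓ : τ ≤ ℓ
  · exact (levelSize_le_of_mem_loopValues (hinv.1 ℓ hℓ)).trans (Nat.le_add_right _ _)
  have hmul : j * F.eval (loopBound Γ X A F τ ν (ℓ + 1)) ≤ A.eval (levelSize Γ X (ℓ + 1) ν) *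
      F.eval ((levelPoly A F τ).eval (levelSize Γ X (ℓ + 1) ν)) :=
    Nat.mul_le_mul (hj.trans (hK _ (by omega))) (eval_mono F (levelPoly_mono A F (by omega) _))
  have := hinv.2 ℓ (by omega)
  simp only [Polynomial.eval_mul, Polynomial.eval_comp]
  omega

end Loop

theorem TypS.innerBound_and_outerBound [Fintype σ] [DecidableEq σ] {zero one : σ} {Γ : ℕ → ℕ}
    {Δ : OpEnv O} {X : Finset ℕ} (hΔ : SafeOpEnv zero one Δ) {τin τout t : ℕ} {s : Stmt O}
    (h : TypS Γ Δ τin τout s t) (hX : s.vars ⊆ X) :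
    (1 ≤ τin → 1 ≤ τout → InnerBound one Γ X s) ∧
      (τin = 0 → τout = 0 → OuterBound one Γ X s) := by
  induction h with
  | sub _ _ _ _ _ _ _ ih => exact ih hX
  | skip =>
    exact ⟨fun _ _ => .of_evalBound evalBound_skip, fun _ _ => .of_evalBound evalBound_skip⟩
  | assign _ _ x e _ he hx =>
    simp only [Stmt.vars, Finset.insert_subset_iff] at hX
    exact ⟨fun _ ho => .assign hΔ he hx ho hX.2, fun _ _ => .assign hΔ.polyOp hX.2⟩
  | seq _ _ _ _ _ _ _ ih₁ ih₂ =>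
    simp only [Stmt.vars, Finset.union_subset_iff] at hX
    exact ⟨fun hi ho => ((ih₁ hX.1).1 hi ho).seq ((ih₂ hX.2).1 hi ho),
      fun hi ho => ((ih₁ hX.1).2 hi ho).seq ((ih₂ hX.2).2 hi ho)⟩
  | cond _ _ _ _ _ _ _ _ _ ih₁ ih₀ =>
    simp only [Stmt.vars, Finset.union_subset_iff] at hX
    exact ⟨fun hi ho => ((ih₁ hX.2.1).1 hi ho).ite ((ih₀ hX.2.2).1 hi ho),
      fun hi ho => ((ih₁ hX.2.1).2 hi ho).ite ((ih₀ hX.2.2).2 hi ho)⟩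
  | whileNested _ _ _ _ _ he hs hτ hτo ih =>
    simp only [Stmt.vars, Finset.union_subset_iff] at hX
    exact ⟨fun _ _ => .whileLoop hΔ hτ hτo he hs hX.1 hX.2 ((ih hX.2).1 hτ (hτ.trans hτo)),
      fun _ ho => by omega⟩
  | whileInit _ _ _ he hs hτ ih =>
    simp only [Stmt.vars, Finset.union_subset_iff] at hX
    exact ⟨fun hi _ => by omega,
      fun _ _ => (InnerBound.whileLoop hΔ hτ le_rfl he hs hX.1 hX.2 ((ih hX.2).1 hτ hτ)).outerBound⟩
  | brk => exact ⟨fun _ _ => .of_evalBound evalBound_brk, fun _ _ => .of_evalBound evalBound_brk⟩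

lemma foldl_update_apply {α β : Type*} [DecidableEq α] (l : List (α × β)) (f : α → β) (a : α) :
    l.foldl (fun g p => Function.update g p.1 p.2) f a = f a ∨
      ∃ p ∈ l, l.foldl (fun g p => Function.update g p.1 p.2) f a = p.2 := by
  induction l generalizing f with
  | nil => exact .inl rfl
  | cons p l ih =>
    rcases ih (Function.update f p.1 p.2) with h | ⟨q, hq, h⟩
    · rw [List.foldl_cons, h]
      rcases eq_or_ne a p.1 with rfl | hne
      · exact .inr ⟨p, List.mem_cons_self, Function.update_self ..⟩
      · exact .inl (Function.update_of_ne hne ..)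
    · exact .inr ⟨q, List.mem_cons_of_mem _ hq, h⟩

lemma levelSize_initStore_le (Γ : ℕ → ℕ) (X : Finset ℕ) (P : Prog O) (ws : Fin P.arity → Word σ) :
    levelSize Γ X 0 (initStore P ws) ≤ ∑ i, (ws i).length := by
  refine levelSize_le fun x _ _ => ?_
  rcases foldl_update_apply (List.ofFn fun i => (P.params i, ws i)) (fun _ => []) x with
    h | ⟨p, hp, h⟩
  · simp [initStore, h]
  · obtain ⟨i, rfl⟩ := List.mem_ofFn.mp hp
    rw [initStore, h]
    exact Finset.single_le_sum (f := fun i => (ws i).length) (fun _ _ => Nat.zero_le _)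
      (Finset.mem_univ i)

theorem safe_ap_polynomial_runtime_general (σ : Type) [Fintype σ] [DecidableEq σ]
    (zero one : σ) (O : OpSig σ) (P : Prog O) (hsafe : Safe zero one P) (hap : Aperiodic one P) :
    ∃ Q : Polynomial ℕ, ∀ ws : Fin P.arity → Word σ,
      ∃ (b : Bool) (μ' : Store σ) (N : ℕ),
        EvalSN one (initStore P ws) P.body (b, μ') N ∧
        N ≤ Q.eval (Finset.univ.sum fun i => (ws i).length) := by
  obtain ⟨Δ, hΔ, Γ, τ, h⟩ := hsafe
  obtain ⟨Fc, _, hb⟩ := (h.innerBound_and_outerBound (one := one) hΔ subset_rfl).2 rfl rfl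
  refine ⟨Fc, fun ws => ?_⟩
  obtain ⟨b, μ', N, hev, hN, -⟩ := hb _ (hap _)
  exact ⟨b, μ', N, hev, hN.trans (eval_mono Fc (levelSize_initStore_le Γ _ P ws))⟩

/-- **Polynomial runtime bound for safe aperiodic programs** (core of the
soundness proof): for every safe and aperiodic program there is a polynomial `Q`
such that, on every input `w̄`, the evaluation tree of the body on the input
store is finite, with at most `Q(Σᵢ |wᵢ|)` nodes. -/
theorem safe_ap_polynomial_runtime (σ : Type) [Fintype σ] [DecidableEq σ]
    (zero one : σ) (hzo : zero ≠ one)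
    (O : OpSig σ) (P : Prog O) (hsafe : Safe zero one P) (hap : Aperiodic one P) :
    ∃ Q : Polynomial ℕ, ∀ ws : Fin P.arity → Word σ,
      ∃ (b : Bool) (μ' : Store σ) (N : ℕ),
        EvalSN one (initStore P ws) P.body (b, μ') N ∧
        N ≤ Q.eval (Finset.univ.sum fun i => (ws i).length) :=
  safe_ap_polynomial_runtime_general σ zero one O P hsafe hap

end Declass
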